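/- arXiv:1911.06451 — 2 statements merged into one kernel-verified Lean document; each statement's English description precedes it below -/
import Mathlib

section
/- Let p, q ≥ 0 and let θ_1, …, θ_p and ρ_0, ρ_1, …, ρ_q be real numbers such that 1 − Σ_{i=1}^p θ_i z^i ≠ 0 for every complex z with |z| ≤ 1. Let S : [−π, π] → ℝ be integrable, nonnegative and even, continuous at 0 with S(0) > 0, and define T(ω) = |Σ_{j=0}^q ρ_j e^{−ijω}|² / |1 − Σ_{i=1}^p θ_i e^{−iiω}|². If lim_{n→∞} M_{T·S}(n) / M_S(n) = 1, then (Σ_{j=0}^q ρ_j)² = (1 − Σ_{i=1}^p θ_i)². -/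
set_option maxHeartbeats 1000000

open scoped Topology


open MeasureTheory Real Filter Finset

/-- The `n`-th Fejér kernel `F_n(ω) = Σ_{j=-(n-1)}^{n-1} (1 - |j|/n) e^{-ijω}`,
written in its (equal) real form via cosines. -/
noncomputable def fejerKernel (n : ℕ) (ω : ℝ) : ℝ :=
  ∑ j ∈ Finset.Icc (-(n : ℤ) + 1) ((n : ℤ) - 1), (1 - |(j : ℝ)| / n) * Real.cos (j * ω)

/-- The generalized mean squared displacement `M_S(n) = n ∫_{-π}^{π} F_n(ω) S(ω) dω`. -/
noncomputable def gmsd (S : ℝ → ℝ) (n : ℕ) : ℝ :=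
  n * ∫ ω in (-π)..π, fejerKernel n ω * S ω

/-- The ARMA(p,q) transfer function
`T(ω) = |Σ_{j=0}^q ρ_j e^{-ijω}|² / |1 - Σ_{i=1}^p θ_i e^{-iiω}|²`. -/
noncomputable def armaTransfer (p q : ℕ) (θ ρ : ℕ → ℝ) (ω : ℝ) : ℝ :=
  ‖∑ j ∈ Finset.range (q + 1),
      (ρ j : ℂ) * Complex.exp (-Complex.I * j * ω)‖ ^ 2 /
    ‖1 - ∑ i ∈ Finset.Icc 1 p,
      (θ i : ℂ) * Complex.exp (-Complex.I * i * ω)‖ ^ 2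



section auxiliaryFejer

lemma dirichlet_sin (n : ℕ) (x : ℝ) :
    (∑ j ∈ Finset.Icc (-(n : ℤ)) (n : ℤ), Real.cos (j * (2 * x))) * Real.sin x
      = Real.sin ((2 * n + 1) * x) := by
  induction n with
  | zero => simp [one_mul]
  | succ n ih =>
    have hset : Finset.Icc (-((n:ℤ)+1)) ((n:ℤ)+1)
        = insert (-((n:ℤ)+1)) (insert ((n:ℤ)+1) (Finset.Icc (-(n:ℤ)) (n:ℤ))) := by
      ext j; simp [Finset.mem_Icc]; omega
    have h1 : (-((n:ℤ)+1)) ∉ insert ((n:ℤ)+1) (Finset.Icc (-(n:ℤ)) (n:ℤ)) := by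
      simp [Finset.mem_Icc]; omega
    have h2 : ((n:ℤ)+1) ∉ Finset.Icc (-(n:ℤ)) (n:ℤ) := by simp
    have hcast : ((n+1 : ℕ) : ℤ) = (n:ℤ)+1 := by push_cast; ring
    rw [hcast, hset, Finset.sum_insert h1, Finset.sum_insert h2]
    have e1 : (((-((n:ℤ)+1)) : ℤ) : ℝ) * (2*x) = -((((2*(n:ℝ)+1)*x) + x) ) := by push_cast; ring
    have e2 : (((((n:ℤ)+1)) : ℤ) : ℝ) * (2*x) = ((2*(n:ℝ)+1)*x) + x := by push_cast; ring
    rw [e1, e2, Real.cos_neg]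
    have e3 : (2 * ((n+1:ℕ):ℝ) + 1) * x = (((2*(n:ℝ)+1)*x) + x) + x := by push_cast; ring
    rw [e3]
    simp only [Real.sin_add, Real.cos_add]
    linear_combination ih - Real.sin ((2*(n:ℝ)+1)*x) * Real.sin_sq_add_cos_sq x

lemma fejer_closed (n : ℕ) (ω : ℝ) :
    (n : ℝ) * fejerKernel n ω * (Real.sin (ω/2))^2 = (Real.sin (n * (ω/2)))^2 := by
  induction n with
  | zero => simp [fejerKernel]
  | succ n ih =>
    have hg : ∀ m : ℕ, (m : ℝ) * fejerKernel m ω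
        = ∑ j ∈ Finset.Icc (-(m : ℤ) + 1) ((m : ℤ) - 1), ((m:ℝ) - |(j : ℝ)|) * Real.cos (j * ω) := by
      intro m
      rw [fejerKernel, Finset.mul_sum]
      rcases Nat.eq_zero_or_pos m with hm | hm
      · simp [hm]
      refine Finset.sum_congr rfl fun j hj => ?_
      have : (m:ℝ) ≠ 0 := by positivity
      field_simp
    have hstep : ((n+1:ℕ):ℝ) * fejerKernel (n+1) ω = (n:ℝ) * fejerKernel n ω
        + ∑ j ∈ Finset.Icc (-(n:ℤ)) (n:ℤ), Real.cos (j * ω) := by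
      rw [hg n, hg (n+1)]
      have hsub : Finset.Icc (-(n:ℤ) + 1) ((n:ℤ) - 1) ⊆ Finset.Icc (-(n:ℤ)) (n:ℤ) := by
        intro j hj; simp [Finset.mem_Icc] at *; omega
      have hext : ∑ j ∈ Finset.Icc (-(n:ℤ) + 1) ((n:ℤ) - 1), ((n:ℝ) - |(j : ℝ)|) * Real.cos (j * ω)
          = ∑ j ∈ Finset.Icc (-(n:ℤ)) (n:ℤ), ((n:ℝ) - |(j : ℝ)|) * Real.cos (j * ω) := by
        refine Finset.sum_subset hsub fun j hj hj' => ?_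
        have hjn : j = -(n:ℤ) ∨ j = (n:ℤ) := by simp [Finset.mem_Icc] at *; omega
        have habs : |(j:ℝ)| = (n:ℝ) := by
          rcases hjn with h | h <;> subst h <;> push_cast <;> simp [abs_of_nonneg]
        rw [habs]; ring
      push_cast
      rw [show (-((n:ℤ)+1) + 1 : ℤ) = -(n:ℤ) from by ring,
        show ((n:ℤ)+1-1 : ℤ) = (n:ℤ) from by ring, hext, ← Finset.sum_add_distrib]
      refine Finset.sum_congr rfl fun j hj => ?_
      push_cast
      ring
    have hD : (∑ j ∈ Finset.Icc (-(n:ℤ)) (n:ℤ), Real.cos (j * ω)) * Real.sin (ω/2)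
        = Real.sin ((2*n+1) * (ω/2)) := by
      have := dirichlet_sin n (ω/2)
      have harg : ∀ j : ℤ, (j:ℝ) * (2 * (ω/2)) = j * ω := fun j => by ring
      simpa only [harg] using this
    rw [hstep, add_mul, ih]
    have e4 : ((n+1:ℕ):ℝ) * (ω/2) = (n:ℝ) * (ω/2) + ω/2 := by push_cast; ring
    rw [e4]
    have e5 : (2*(n:ℝ)+1) * (ω/2) = (n:ℝ)*(ω/2) + ((n:ℝ)*(ω/2) + ω/2) := by ring
    have hD2 := hD
    rw [e5] at hD2
    have expand : (∑ j ∈ Finset.Icc (-(n:ℤ)) (n:ℤ), Real.cos (j * ω)) * (Real.sin (ω/2))^2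
        = Real.sin ((n:ℝ)*(ω/2) + ((n:ℝ)*(ω/2) + ω/2)) * Real.sin (ω/2) := by
      rw [← hD2]; ring
    rw [expand]
    simp only [Real.sin_add, Real.cos_add]
    linear_combination (-(Real.sin ((n:ℝ)*(ω/2)))^2) * Real.sin_sq_add_cos_sq (ω/2)

lemma fejer_continuous (n : ℕ) : Continuous (fejerKernel n) := by
  unfold fejerKernel
  refine continuous_finset_sum _ fun j _ => ?_
  exact continuous_const.mul (Real.continuous_cos.comp (continuous_const.mul continuous_id))

lemma fejer_nonneg (n : ℕ) (ω : ℝ) : 0 ≤ fejerKernel n ω := by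
  rcases Nat.eq_zero_or_pos n with hn | hn
  · simp [hn, fejerKernel]
  by_cases hs : Real.sin (ω/2) = 0
  · -- ω is a multiple of 2π, all cosines are 1
    obtain ⟨k, hk⟩ := Real.sin_eq_zero_iff.1 hs
    refine Finset.sum_nonneg fun j hj => ?_
    have hcos : Real.cos ((j:ℝ) * ω) = 1 := by
      have hω : ω = 2 * ((k:ℝ) * π) := by linarith
      have : (j:ℝ) * ω = ((j * k : ℤ) : ℝ) * (2 * π) := by rw [hω]; push_cast; ring
      rw [this, Real.cos_int_mul_two_pi]
    rw [hcos, mul_one, sub_nonneg]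
    have hj' : |j| ≤ (n:ℤ) := by
      simp [Finset.mem_Icc] at hj; rw [abs_le]; omega
    have : |(j:ℝ)| ≤ (n:ℝ) := by
      rw [← Int.cast_abs]; exact_mod_cast hj'
    rw [div_le_one (by positivity)]; exact this
  · have h := fejer_closed n ω
    have h1 : 0 < (n:ℝ) * (Real.sin (ω/2))^2 := by positivity
    nlinarith [sq_nonneg (Real.sin ((n:ℝ) * (ω/2)))]

lemma fejer_le (n : ℕ) (hn : 1 ≤ n) (ω : ℝ) {m : ℝ} (hm : 0 < m)
    (hms : m ≤ (Real.sin (ω/2))^2) : fejerKernel n ω ≤ 1 / ((n:ℝ) * m) := by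
  have h := fejer_closed n ω
  have hn' : (0:ℝ) < n := by exact_mod_cast hn
  have h2 : (Real.sin ((n:ℝ) * (ω/2)))^2 ≤ 1 := by
    rw [sq_le_one_iff_abs_le_one]; exact Real.abs_sin_le_one _
  rw [le_div_iff₀ (by positivity)]
  have h3 := fejer_nonneg n ω
  nlinarith

lemma cos_int_integral (j : ℤ) :
    ∫ ω in (-π)..π, Real.cos ((j:ℝ) * ω) = if j = 0 then 2*π else 0 := by
  by_cases hj : j = 0
  · simp [hj, two_mul]
  · have hc : ((j:ℝ)) ≠ 0 := Int.cast_ne_zero.2 hj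
    rw [if_neg hj]
    rw [intervalIntegral.integral_comp_mul_left Real.cos hc, integral_cos]
    simp [mul_neg, Real.sin_int_mul_pi]

lemma fejer_integral (n : ℕ) (hn : 1 ≤ n) :
    ∫ ω in (-π)..π, fejerKernel n ω = 2*π := by
  unfold fejerKernel
  rw [intervalIntegral.integral_finset_sum]
  · have : ∀ j ∈ Finset.Icc (-(n : ℤ) + 1) ((n : ℤ) - 1),
        (∫ ω in (-π)..π, (1 - |(j : ℝ)| / n) * Real.cos (j * ω))
          = if j = 0 then 2*π else 0 := by
      intro j hj
      rw [intervalIntegral.integral_const_mul, cos_int_integral j]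
      by_cases hj0 : j = 0 <;> simp [hj0]
    rw [Finset.sum_congr rfl this, Finset.sum_ite_eq' _ (0:ℤ) (fun _ => 2*π)]
    have : (0:ℤ) ∈ Finset.Icc (-(n : ℤ) + 1) ((n : ℤ) - 1) := by
      simp [Finset.mem_Icc]; omega
    simp [this]
  · intro j hj
    exact (continuous_const.mul
      (Real.continuous_cos.comp (continuous_const.mul continuous_id))).intervalIntegrable _ _

lemma icc_integral_eq (f : ℝ → ℝ) :
    ∫ ω in Set.Icc (-π) π, f ω = ∫ ω in (-π)..π, f ω := by
  rw [intervalIntegral.integral_of_le (by linarith [Real.pi_pos]),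
    MeasureTheory.integral_Icc_eq_integral_Ioc]

lemma sin_half_ne_zero {ω : ℝ} (h1 : ω ∈ Set.Icc (-π) π) (h2 : ω ≠ 0) :
    Real.sin (ω/2) ≠ 0 := by
  obtain ⟨ha, hb⟩ := h1
  have hπ := Real.pi_pos
  intro h
  rcases (Real.sin_eq_zero_iff_of_lt_of_lt (by linarith) (by linarith)).1 h with h'
  exact h2 (by linarith)

lemma fejer_tendsto (g : ℝ → ℝ) (hg : IntegrableOn g (Set.Icc (-π) π))
    (hcg : ContinuousAt g 0) :
    Tendsto (fun n : ℕ => ∫ ω in (-π)..π, fejerKernel n ω * g ω) atTop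
      (𝓝 (2 * π * g 0)) := by
  have hπ := Real.pi_pos
  set s : Set ℝ := Set.Icc (-π) π with hsdef
  set φ : ℕ → ℝ → ℝ := fun n ω => fejerKernel n ω / (2*π) with hφdef
  have key : Tendsto (fun n : ℕ => ∫ x in s, φ n x • g x) atTop (𝓝 (g 0)) := by
    apply tendsto_setIntegral_peak_smul_of_integrableOn_of_tendsto (x₀ := (0:ℝ))
      (t := s) measurableSet_Icc measurableSet_Icc subset_rfl self_mem_nhdsWithin
      (by exact (measure_Icc_lt_top).ne)
    · exact Eventually.of_forall fun n ω _ => div_nonneg (fejer_nonneg n ω) (by positivity)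
    · -- uniform convergence away from 0
      intro u hu h0u
      rcases Set.eq_empty_or_nonempty (s \ u) with he | hne
      · rw [he]; exact tendstoUniformlyOn_empty
      · have hK : IsCompact (s \ u) := isCompact_Icc.diff hu
        obtain ⟨ω₀, hω₀, hmin⟩ := hK.exists_isMinOn hne
          (Continuous.continuousOn (by fun_prop : Continuous fun ω => (Real.sin (ω/2))^2))
        have hω₀0 : ω₀ ≠ 0 := fun h => hω₀.2 (h ▸ h0u)
        have hm : 0 < (Real.sin (ω₀/2))^2 :=
          pow_pos (abs_pos.2 (sin_half_ne_zero hω₀.1 hω₀0)) 2 |>.trans_le (le_of_eq (sq_abs _))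
        set m := (Real.sin (ω₀/2))^2 with hmdef
        rw [Metric.tendstoUniformlyOn_iff]
        intro ε hε
        have hlim0 : Tendsto (fun n : ℕ => 1 / ((n:ℝ) * m) / (2*π)) atTop (𝓝 0) := by
          have hfun : (fun n : ℕ => 1 / ((n:ℝ) * m) / (2*π))
              = fun n : ℕ => 1 / ((n:ℝ) * m * (2*π)) := by
            funext n; rw [div_div]
          rw [hfun]
          exact Tendsto.div_atTop tendsto_const_nhds
            (((tendsto_natCast_atTop_atTop).atTop_mul_const hm).atTop_mul_const (by positivity))
        filter_upwards [hlim0.eventually (gt_mem_nhds hε), eventually_ge_atTop 1]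
          with n hn1 hn2 ω hω
        have hb : φ n ω ≤ 1 / ((n:ℝ)*m) / (2*π) := by
          have h1 := fejer_le n hn2 ω hm (hmin hω)
          rw [hφdef]; dsimp only; gcongr
        have hb0 : 0 ≤ φ n ω := div_nonneg (fejer_nonneg _ _) (by positivity)
        have : dist ((0:ℝ → ℝ) ω) (φ n ω) = φ n ω := by
          simp [Real.dist_eq, abs_of_nonneg hb0]
        rw [this]
        exact lt_of_le_of_lt hb hn1
    · -- integral tendsto 1
      apply tendsto_const_nhds.congr'
      filter_upwards [eventually_ge_atTop 1] with n hn
      have : ∫ x in s, φ n x = (∫ ω in (-π)..π, fejerKernel n ω) / (2*π) := by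
        rw [hφdef, hsdef]
        rw [icc_integral_eq (fun ω => fejerKernel n ω / (2*π)), intervalIntegral.integral_div]
      rw [this, fejer_integral n hn, div_self (by positivity)]
    · exact Eventually.of_forall fun n =>
        ((fejer_continuous n).div_const _).aestronglyMeasurable
    · exact hg
    · exact (hcg.continuousWithinAt).tendsto
  have heq : ∀ n : ℕ, (2*π) * ∫ x in s, φ n x • g x
      = ∫ ω in (-π)..π, fejerKernel n ω * g ω := by
    intro n
    have : ∫ x in s, φ n x • g x = (∫ ω in (-π)..π, fejerKernel n ω * g ω) / (2*π) := by
      rw [show (fun x => φ n x • g x) = fun x => (fejerKernel n x * g x) / (2*π) by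
        funext x; rw [hφdef]; simp [smul_eq_mul]; ring]
      rw [icc_integral_eq (fun ω => fejerKernel n ω * g ω / (2*π)),
        intervalIntegral.integral_div]
    rw [this, mul_div_cancel₀ _ (by positivity : (2*π:ℝ) ≠ 0)]
  have := key.const_mul (2*π)
  simpa only [heq] using this

end auxiliaryFejer

section arma
variable (p q : ℕ) (θ ρ : ℕ → ℝ)

lemma arma_den_ne (hstat : ∀ z : ℂ, ‖z‖ ≤ 1 →
      1 - ∑ i ∈ Finset.Icc 1 p, (θ i : ℂ) * z ^ i ≠ 0) (ω : ℝ) :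
    1 - ∑ i ∈ Finset.Icc 1 p, (θ i : ℂ) * Complex.exp (-Complex.I * i * ω) ≠ 0 := by
  have habs : ‖Complex.exp (-Complex.I * ω)‖ ≤ 1 := by
    rw [Complex.norm_exp]
    simp [Complex.mul_re]
  have h := hstat _ habs
  have hz : ∀ i : ℕ, (θ i : ℂ) * Complex.exp (-Complex.I * ω) ^ i
      = (θ i : ℂ) * Complex.exp (-Complex.I * i * ω) := by
    intro i
    rw [← Complex.exp_nat_mul]
    congr 1
    ring
  simpa only [hz] using h

lemma arma_continuous (hstat : ∀ z : ℂ, ‖z‖ ≤ 1 →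
      1 - ∑ i ∈ Finset.Icc 1 p, (θ i : ℂ) * z ^ i ≠ 0) :
    Continuous (armaTransfer p q θ ρ) := by
  unfold armaTransfer
  have hsum1 : Continuous fun ω : ℝ => ∑ j ∈ Finset.range (q + 1),
      (ρ j : ℂ) * Complex.exp (-Complex.I * j * ω) := by fun_prop
  have hsum2 : Continuous fun ω : ℝ => 1 - ∑ i ∈ Finset.Icc 1 p,
      (θ i : ℂ) * Complex.exp (-Complex.I * i * ω) := by fun_prop
  have hnum : Continuous fun ω : ℝ => ‖∑ j ∈ Finset.range (q + 1),
      (ρ j : ℂ) * Complex.exp (-Complex.I * j * ω)‖ ^ 2 :=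
    (continuous_norm.comp hsum1).pow 2
  have hden : Continuous fun ω : ℝ => ‖1 - ∑ i ∈ Finset.Icc 1 p,
      (θ i : ℂ) * Complex.exp (-Complex.I * i * ω)‖ ^ 2 :=
    (continuous_norm.comp hsum2).pow 2
  exact hnum.div hden fun ω =>
    pow_ne_zero _ (norm_ne_zero_iff.2 (arma_den_ne p θ hstat ω))

lemma arma_zero (hstat : ∀ z : ℂ, ‖z‖ ≤ 1 →
      1 - ∑ i ∈ Finset.Icc 1 p, (θ i : ℂ) * z ^ i ≠ 0) :
    armaTransfer p q θ ρ 0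
      = (∑ j ∈ Finset.range (q + 1), ρ j) ^ 2
        / (1 - ∑ i ∈ Finset.Icc 1 p, θ i) ^ 2 := by
  unfold armaTransfer
  have h1 : ∀ j : ℕ, Complex.exp (-Complex.I * j * ((0:ℝ):ℂ)) = 1 := by
    intro j; simp
  simp only [h1, mul_one]
  rw [show (∑ j ∈ Finset.range (q + 1), (ρ j : ℂ))
      = ((∑ j ∈ Finset.range (q + 1), ρ j : ℝ) : ℂ) by push_cast; ring]
  rw [show (1 - ∑ i ∈ Finset.Icc 1 p, (θ i : ℂ))
      = ((1 - ∑ i ∈ Finset.Icc 1 p, θ i : ℝ) : ℂ) by push_cast; ring]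
  rw [Complex.norm_real, Complex.norm_real, Real.norm_eq_abs, Real.norm_eq_abs, sq_abs, sq_abs]

end arma

theorem arma_restriction_necessary
    (p q : ℕ) (θ ρ : ℕ → ℝ)
    (hstat : ∀ z : ℂ, ‖z‖ ≤ 1 →
      1 - ∑ i ∈ Finset.Icc 1 p, (θ i : ℂ) * z ^ i ≠ 0)
    (S : ℝ → ℝ)
    (hSint : IntegrableOn S (Set.Icc (-π) π))
    (hSnonneg : ∀ ω, 0 ≤ S ω)
    (hSeven : ∀ ω, S (-ω) = S ω)
    (hScont : ContinuousAt S 0)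
    (hS0 : 0 < S 0)
    (hlim : Tendsto (fun n : ℕ =>
        gmsd (fun ω => armaTransfer p q θ ρ ω * S ω) n / gmsd S n)
      atTop (nhds 1)) :
    (∑ j ∈ Finset.range (q + 1), ρ j) ^ 2 =
      (1 - ∑ i ∈ Finset.Icc 1 p, θ i) ^ 2 := by
  have hπ := Real.pi_pos
  set T := armaTransfer p q θ ρ with hT
  have hTcont : Continuous T := arma_continuous p q θ ρ hstat
  have hTSint : IntegrableOn (fun ω => T ω * S ω) (Set.Icc (-π) π) :=
    hSint.continuousOn_mul (hTcont.continuousOn) isCompact_Icc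
  have ha := fejer_tendsto (fun ω => T ω * S ω) hTSint
    ((hTcont.continuousAt).mul hScont)
  have hb := fejer_tendsto S hSint hScont
  have hb0 : (2 * π * S 0 : ℝ) ≠ 0 := by positivity
  have hdiv : Tendsto (fun n : ℕ =>
      (∫ ω in (-π)..π, fejerKernel n ω * (T ω * S ω)) /
        (∫ ω in (-π)..π, fejerKernel n ω * S ω)) atTop (𝓝 (T 0)) := by
    have := ha.div hb hb0
    have hval : 2 * π * (T 0 * S 0) / (2 * π * S 0) = T 0 := by
      field_simp
    rwa [hval] at this
  have heq : ∀ᶠ n : ℕ in atTop,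
      gmsd (fun ω => T ω * S ω) n / gmsd S n
        = (∫ ω in (-π)..π, fejerKernel n ω * (T ω * S ω)) /
            (∫ ω in (-π)..π, fejerKernel n ω * S ω) := by
    filter_upwards [eventually_ge_atTop 1] with n hn
    have hn0 : ((n:ℝ)) ≠ 0 := by positivity
    rw [gmsd, gmsd, mul_div_mul_left _ _ hn0]
  have hT1 : T 0 = 1 := tendsto_nhds_unique hdiv (hlim.congr' heq)
  rw [hT, arma_zero p q θ ρ hstat] at hT1
  have hden : (1 - ∑ i ∈ Finset.Icc 1 p, θ i) ≠ 0 := by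
    have h := hstat 1 (by simp)
    simp only [one_pow, mul_one] at h
    intro hc
    apply h
    rw [show (1 : ℂ) - ∑ i ∈ Finset.Icc 1 p, (θ i : ℂ)
        = ((1 - ∑ i ∈ Finset.Icc 1 p, θ i : ℝ) : ℂ) by push_cast; ring, hc]
    simp
  field_simp at hT1
  linarith
end

section
/- Let 0 < α < 2, τ > 0 and Δ ∈ ℝ. Then ∫_{−τ}^{τ} (τ − |w|)·|Δ − w|^α dw = (|Δ + τ|^{α+2} + |Δ − τ|^{α+2} − 2|Δ|^{α+2}) / ((α + 1)(α + 2)). -/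
open Real intervalIntegral

lemma hasDerivAt_mul_abs_rpow {β : ℝ} (hβ : 0 < β) (x : ℝ) :
    HasDerivAt (fun y : ℝ => y * |y| ^ β) ((β + 1) * |x| ^ β) x := by
  rcases lt_trichotomy x 0 with hx | hx | hx
  · have hev : (fun y : ℝ => y * |y| ^ β) =ᶠ[nhds x] (fun y : ℝ => y * (-y) ^ β) := by
      filter_upwards [Iio_mem_nhds hx] with y hy
      rw [abs_of_neg hy]
    have hinner : HasDerivAt (fun y : ℝ => (-y) ^ β) (β * (-x) ^ (β - 1) * (-1)) x :=
      (Real.hasDerivAt_rpow_const (p := β) (Or.inl (by linarith : (-x : ℝ) ≠ 0))).comp x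
        (hasDerivAt_neg x)
    have h := (hasDerivAt_id x).mul hinner
    have h2 : HasDerivAt (fun y : ℝ => y * (-y) ^ β) ((β + 1) * |x| ^ β) x := by
      refine h.congr_deriv ?_
      rw [abs_of_neg hx]
      have hxpos : (0:ℝ) < -x := by linarith
      rw [show β - 1 = β + (-1) by ring, Real.rpow_add hxpos, Real.rpow_neg_one]
      field_simp [hx.ne]
      simp only [id_eq]; ring
    exact h2.congr_of_eventuallyEq hev
  · subst hx
    have hc : Filter.Tendsto (fun y : ℝ => |y| ^ β) (nhds 0) (nhds 0) := by
      have hct : ContinuousAt (fun y : ℝ => |y| ^ β) 0 :=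
        (continuous_abs.continuousAt).rpow_const (Or.inr hβ.le)
      simpa [Real.zero_rpow hβ.ne'] using hct.tendsto
    have hmain : HasDerivAt (fun y : ℝ => y * |y| ^ β) 0 0 := by
      rw [hasDerivAt_iff_tendsto_slope]
      apply (hc.mono_left nhdsWithin_le_nhds).congr'
      filter_upwards [self_mem_nhdsWithin] with y hy
      have hy' : y ≠ 0 := hy
      rw [slope_def_field]; field_simp; simp
    simpa [Real.zero_rpow hβ.ne'] using hmain
  · have hev : (fun y : ℝ => y * |y| ^ β) =ᶠ[nhds x] (fun y : ℝ => y * y ^ β) := by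
      filter_upwards [Ioi_mem_nhds hx] with y hy
      rw [abs_of_pos hy]
    have hinner : HasDerivAt (fun y : ℝ => y ^ β) (β * x ^ (β - 1)) x :=
      Real.hasDerivAt_rpow_const (Or.inl hx.ne')
    have h := (hasDerivAt_id x).mul hinner
    have h2 : HasDerivAt (fun y : ℝ => y * y ^ β) ((β + 1) * |x| ^ β) x := by
      refine h.congr_deriv ?_
      rw [abs_of_pos hx]
      rw [show β - 1 = β + (-1) by ring, Real.rpow_add hx, Real.rpow_neg_one]
      field_simp [hx.ne']
      simp only [id_eq]; ring
    exact h2.congr_of_eventuallyEq hev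

lemma sq_mul_abs_rpow {α : ℝ} (hα : 0 < α) (x : ℝ) :
    x * (x * |x| ^ α) = |x| ^ (α + 2) := by
  rcases eq_or_ne x 0 with rfl | hx
  · simp [Real.zero_rpow (by linarith : α + 2 ≠ 0)]
  · have h := abs_pos.mpr hx
    rw [show α + 2 = α + ((2:ℕ):ℝ) by norm_num, Real.rpow_add h, Real.rpow_natCast]
    rw [show |x| ^ (2:ℕ) = x ^ 2 from sq_abs x]
    ring

lemma hasDerivAt_abs_rpow_two {α : ℝ} (hα : 0 < α) (x : ℝ) :
    HasDerivAt (fun y : ℝ => |y| ^ (α + 2)) ((α + 2) * (x * |x| ^ α)) x := by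
  have h := (hasDerivAt_id x).mul (hasDerivAt_mul_abs_rpow hα x)
  simp only [id_eq, Pi.mul_def] at h
  have hfun : (fun y : ℝ => y * (y * |y| ^ α)) = fun y : ℝ => |y| ^ (α + 2) := by
    funext y; exact sq_mul_abs_rpow hα y
  rw [hfun] at h
  refine h.congr_deriv ?_
  ring

theorem triangular_kernel_power_integral
    (α τ Δ : ℝ) (hα : 0 < α) (hα2 : α < 2) (hτ : 0 < τ) :
    ∫ w in (-τ)..τ, (τ - |w|) * |Δ - w| ^ α =
      (|Δ + τ| ^ (α + 2) + |Δ - τ| ^ (α + 2) - 2 * |Δ| ^ (α + 2)) /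
        ((α + 1) * (α + 2)) := by
  have h1 : (α + 1 : ℝ) ≠ 0 := by linarith
  have h2 : (α + 2 : ℝ) ≠ 0 := by linarith
  have hAw : ∀ w : ℝ, HasDerivAt (fun w : ℝ => (Δ - w) * |Δ - w| ^ α)
      (-((α + 1) * |Δ - w| ^ α)) w := by
    intro w
    have h := (hasDerivAt_mul_abs_rpow hα (Δ - w)).comp w
      ((hasDerivAt_const w Δ).sub (hasDerivAt_id w))
    refine h.congr_deriv ?_
    ring
  have hBw : ∀ w : ℝ, HasDerivAt (fun w : ℝ => |Δ - w| ^ (α + 2))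
      (-((α + 2) * ((Δ - w) * |Δ - w| ^ α))) w := by
    intro w
    have h := (hasDerivAt_abs_rpow_two hα (Δ - w)).comp w
      ((hasDerivAt_const w Δ).sub (hasDerivAt_id w))
    refine h.congr_deriv ?_
    ring
  have hF : ∀ w : ℝ, HasDerivAt
      (fun w : ℝ => -(τ - Δ) * ((Δ - w) * |Δ - w| ^ α) / (α + 1) - |Δ - w| ^ (α + 2) / (α + 2))
      ((τ - w) * |Δ - w| ^ α) w := by
    intro w
    have h := (((hAw w).const_mul (-(τ - Δ))).div_const (α + 1)).sub ((hBw w).div_const (α + 2))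
    refine h.congr_deriv ?_
    field_simp
    ring
  have hG : ∀ w : ℝ, HasDerivAt
      (fun w : ℝ => -(τ + Δ) * ((Δ - w) * |Δ - w| ^ α) / (α + 1) + |Δ - w| ^ (α + 2) / (α + 2))
      ((τ + w) * |Δ - w| ^ α) w := by
    intro w
    have h := (((hAw w).const_mul (-(τ + Δ))).div_const (α + 1)).add ((hBw w).div_const (α + 2))
    refine h.congr_deriv ?_
    field_simp
    ring
  have hcont0 : Continuous fun w : ℝ => |Δ - w| ^ α :=
    (continuous_const.sub continuous_id).abs.rpow_const (fun x => Or.inr hα.le)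
  have int1 : ∫ w in (0:ℝ)..τ, (τ - w) * |Δ - w| ^ α =
      (-(τ - Δ) * ((Δ - τ) * |Δ - τ| ^ α) / (α + 1) - |Δ - τ| ^ (α + 2) / (α + 2)) -
      (-(τ - Δ) * ((Δ - 0) * |Δ - 0| ^ α) / (α + 1) - |Δ - 0| ^ (α + 2) / (α + 2)) :=
    integral_eq_sub_of_hasDerivAt (fun w _ => hF w)
      (((continuous_const.sub continuous_id).mul hcont0).intervalIntegrable _ _)
  have int2 : ∫ w in (-τ)..(0:ℝ), (τ + w) * |Δ - w| ^ α =
      (-(τ + Δ) * ((Δ - 0) * |Δ - 0| ^ α) / (α + 1) + |Δ - 0| ^ (α + 2) / (α + 2)) -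
      (-(τ + Δ) * ((Δ - -τ) * |Δ - -τ| ^ α) / (α + 1) + |Δ - -τ| ^ (α + 2) / (α + 2)) :=
    integral_eq_sub_of_hasDerivAt (fun w _ => hG w)
      (((continuous_const.add continuous_id).mul hcont0).intervalIntegrable _ _)
  simp only [sub_zero, sub_neg_eq_add] at int1 int2
  have hc : Continuous fun w : ℝ => (τ - |w|) * |Δ - w| ^ α :=
    (continuous_const.sub continuous_abs).mul hcont0
  have hsplit : ∫ w in (-τ)..τ, (τ - |w|) * |Δ - w| ^ α =
      (∫ w in (-τ)..(0:ℝ), (τ - |w|) * |Δ - w| ^ α) +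
      ∫ w in (0:ℝ)..τ, (τ - |w|) * |Δ - w| ^ α :=
    (integral_add_adjacent_intervals (hc.intervalIntegrable _ _) (hc.intervalIntegrable _ _)).symm
  have c1 : ∫ w in (-τ)..(0:ℝ), (τ - |w|) * |Δ - w| ^ α =
      ∫ w in (-τ)..(0:ℝ), (τ + w) * |Δ - w| ^ α := by
    apply integral_congr
    intro w hw
    rw [Set.uIcc_of_le (by linarith : (-τ:ℝ) ≤ 0)] at hw
    show (τ - |w|) * |Δ - w| ^ α = (τ + w) * |Δ - w| ^ α
    rw [abs_of_nonpos hw.2]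
    ring
  have c2 : ∫ w in (0:ℝ)..τ, (τ - |w|) * |Δ - w| ^ α =
      ∫ w in (0:ℝ)..τ, (τ - w) * |Δ - w| ^ α := by
    apply integral_congr
    intro w hw
    rw [Set.uIcc_of_le (by linarith : (0:ℝ) ≤ τ)] at hw
    show (τ - |w|) * |Δ - w| ^ α = (τ - w) * |Δ - w| ^ α
    rw [abs_of_nonneg hw.1]
  rw [hsplit, c1, c2, int1, int2]
  rw [← sq_mul_abs_rpow hα (Δ + τ), ← sq_mul_abs_rpow hα (Δ - τ), ← sq_mul_abs_rpow hα Δ]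
  field_simp
  ring
end
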